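/- Let k be a field, B = B_{n,m} a bipath poset, and V a B-persistence module. Let N ⊆ V(0̂) be a subspace that is mapped isomorphically onto Im V(0̂≤1̂) by the linear map V(0̂≤1̂): V(0̂) → V(1̂), and let Y be the subfunctor of V defined by Y(a) := V(0̂≤a)(N) for all a∈B. Then Y is a direct summand of V, Y is isomorphic to the direct sum of rank V(0̂≤1̂) copies of the interval module k_B, and there exists a B-persistence module W with W(0̂≤1̂)=0 such that V ≅ Y ⊕ W. -/

import Mathlib

open Classical

/-- A persistence module over a poset `P` with coefficients in a field `k`. -/
structure PersMod (k : Type) [Field k] (P : Type) [PartialOrder P] : Type 1 where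
  V : P → Type
  [instAddCommGroup : ∀ a, AddCommGroup (V a)]
  [instModule : ∀ a, Module k (V a)]
  [instFinDim : ∀ a, FiniteDimensional k (V a)]
  map : ∀ {a b : P}, a ≤ b → (V a →ₗ[k] V b)
  map_id : ∀ a : P, map (le_refl a) = LinearMap.id
  map_comp : ∀ {a b c : P} (hab : a ≤ b) (hbc : b ≤ c),
      map (le_trans hab hbc) = (map hbc).comp (map hab)

attribute [instance] PersMod.instAddCommGroup PersMod.instModule PersMod.instFinDim

variable {k : Type} [Field k] {P : Type} [PartialOrder P]

/-- The submodule of natural transformations inside the product of all hom spaces. -/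
def PersMod.homSubmodule (M N : PersMod k P) :
    Submodule k (∀ a : P, M.V a →ₗ[k] N.V a) where
  carrier := {F | ∀ (a b : P) (h : a ≤ b), (F b).comp (M.map h) = (N.map h).comp (F a)}
  add_mem' := by
    intro f g hf hg a b h
    simp only [Pi.add_apply, LinearMap.add_comp, LinearMap.comp_add, hf a b h, hg a b h]
  zero_mem' := by
    intro a b h
    simp
  smul_mem' := by
    intro c f hf a b h
    simp only [Pi.smul_apply, LinearMap.smul_comp, LinearMap.comp_smul, hf a b h]

/-- Morphisms of persistence modules. -/
abbrev PersHom (M N : PersMod k P) := ↥(PersMod.homSubmodule M N)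

/-- Isomorphism of persistence modules. -/
def PersMod.Iso (M N : PersMod k P) : Prop :=
  ∃ f : PersHom M N, ∀ a : P, Function.Bijective (f.1 a)

/-- Identity morphism. -/
def persId (M : PersMod k P) : PersHom M M :=
  ⟨fun _ => LinearMap.id, fun a b h => by simp⟩

/-- Composition of morphisms of persistence modules. -/
def persComp {M N O : PersMod k P} (f : PersHom M N) (g : PersHom N O) : PersHom M O :=
  ⟨fun a => (g.1 a).comp (f.1 a), fun a b h => by
    rw [LinearMap.comp_assoc, f.2 a b h, ← LinearMap.comp_assoc, g.2 a b h,
      LinearMap.comp_assoc]⟩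

/-- Finite direct sums of persistence modules. -/
def PersMod.dsum {ι : Type} [Finite ι] (M : ι → PersMod k P) : PersMod k P where
  V a := ∀ i, (M i).V a
  map h := LinearMap.pi fun i => ((M i).map h).comp (LinearMap.proj i)
  map_id a := by
    ext x i
    simp [PersMod.map_id]
  map_comp hab hbc := by
    apply LinearMap.ext
    intro x
    funext i
    simp only [LinearMap.pi_apply, LinearMap.coe_comp, Function.comp_apply,
      LinearMap.proj_apply]
    rw [(M i).map_comp hab hbc]
    simp

/-- Binary direct sum of persistence modules. -/
def PersMod.prod (M N : PersMod k P) : PersMod k P where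
  V a := M.V a × N.V a
  map h := (M.map h).prodMap (N.map h)
  map_id a := by
    ext x <;> simp [PersMod.map_id]
  map_comp hab hbc := by
    apply LinearMap.ext
    intro x
    try dsimp only
    rw [M.map_comp hab hbc, N.map_comp hab hbc]
    simp

/-- Restriction of a persistence module along a monotone map. -/
def PersMod.comap {Q : Type} [PartialOrder Q] (f : Q →o P) (V : PersMod k P) :
    PersMod k Q where
  V a := V.V (f a)
  map h := V.map (f.monotone h)
  map_id a := V.map_id (f a)
  map_comp hab hbc := V.map_comp (f.monotone hab) (f.monotone hbc)

/-- The sub-persistence module determined by a family of submodules preserved by the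
structure maps. -/
def PersMod.sub (W : PersMod k P) (S : ∀ a : P, Submodule k (W.V a))
    (hS : ∀ {a b : P} (h : a ≤ b), ∀ x ∈ S a, W.map h x ∈ S b) : PersMod k P where
  V a := ↥(S a)
  map h := (W.map h).restrict (hS h)
  map_id a := by
    apply LinearMap.ext
    intro x
    apply Subtype.ext
    simp [LinearMap.restrict_apply, W.map_id]
  map_comp hab hbc := by
    apply LinearMap.ext
    intro x
    apply Subtype.ext
    simp only [LinearMap.restrict_apply, LinearMap.coe_comp, Function.comp_apply]
    rw [W.map_comp hab hbc]
    simp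

/-- Convexity of a subset of a poset. -/
def IsConvex (I : Set P) : Prop :=
  ∀ ⦃a b z : P⦄, a ∈ I → b ∈ I → a ≤ z → z ≤ b → z ∈ I

/-- Connectivity of a subset of a poset: any two points are joined by a finite sequence of
consecutively comparable points inside the subset. -/
def IsConnectedSet (I : Set P) : Prop :=
  ∀ ⦃a⦄, a ∈ I → ∀ ⦃b⦄, b ∈ I →
    Relation.ReflTransGen (fun x y => x ∈ I ∧ y ∈ I ∧ (x ≤ y ∨ y ≤ x)) a b

/-- An interval of a poset: a nonempty convex connected subset. -/
def IsInterval (I : Set P) : Prop :=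
  I.Nonempty ∧ IsConvex I ∧ IsConnectedSet I

/-- The interval module `k_I` attached to a convex subset `I`. -/
noncomputable def intervalModule (k : Type) [Field k] {P : Type} [PartialOrder P] (I : Set P)
    (hI : IsConvex I) : PersMod k P where
  V a := PLift (a ∈ I) → k
  map {a b} _ :=
    { toFun := fun f _ => if ha : a ∈ I then f ⟨ha⟩ else 0
      map_add' := fun f g => by
        funext hb
        by_cases ha : a ∈ I <;> simp [ha]
      map_smul' := fun c f => by
        funext hb
        by_cases ha : a ∈ I <;> simp [ha] }
  map_id a := by
    apply LinearMap.ext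
    intro f
    funext hb
    simp only [LinearMap.coe_mk, AddHom.coe_mk, LinearMap.id_coe, id_eq]
    rw [dif_pos hb.down]
  map_comp {a b c} hab hbc := by
    apply LinearMap.ext
    intro f
    funext hc
    by_cases ha : a ∈ I
    · have hb : b ∈ I := hI ha hc.down hab hbc
      simp only [LinearMap.coe_comp, Function.comp_apply, LinearMap.coe_mk, AddHom.coe_mk,
        dif_pos ha, dif_pos hb]
    · simp only [LinearMap.coe_comp, Function.comp_apply, LinearMap.coe_mk, AddHom.coe_mk,
        dif_neg ha]
      by_cases hb : b ∈ I <;> simp [hb, dif_neg ha]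
/-- The underlying type of the bipath poset `B_{n,m}`:
a global minimum `bot = 0̂`, an upper path `1, …, n`, a lower path `1', …, m'`,
and a global maximum `top = 1̂`. -/
inductive Bipath (n m : ℕ) : Type where
  | bot : Bipath n m
  | up : Fin n → Bipath n m
  | down : Fin m → Bipath n m
  | top : Bipath n m
deriving DecidableEq

namespace Bipath

variable {n m : ℕ}

/-- Auxiliary embedding of the bipath poset into `ℕ × ℕ` (with the product order),
used to define its partial order, which is generated by
`0̂ < 1 < ⋯ < n < 1̂` and `0̂ < 1' < ⋯ < m' < 1̂`. -/
def toPair : Bipath n m → ℕ × ℕ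
  | .bot => (0, 0)
  | .up i => (i.1 + 1, 0)
  | .down j => (0, j.1 + 1)
  | .top => (n + 1, m + 1)

theorem toPair_injective : Function.Injective (toPair (n := n) (m := m)) := by
  intro x y h
  cases x <;> cases y <;>
    simp only [toPair, Prod.mk.injEq] at h <;>
    first
      | rfl
      | (exact absurd h (by omega))
      | (obtain ⟨h1, h2⟩ := h; congr 1; exact Fin.ext (by omega))

instance : PartialOrder (Bipath n m) := PartialOrder.lift toPair toPair_injective

theorem le_iff_toPair {x y : Bipath n m} : x ≤ y ↔ toPair x ≤ toPair y := Iff.rfl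

theorem bot_le' (x : Bipath n m) : (Bipath.bot : Bipath n m) ≤ x := by
  rw [le_iff_toPair, Prod.le_def]
  exact ⟨Nat.zero_le _, Nat.zero_le _⟩

theorem le_top' (x : Bipath n m) : x ≤ (Bipath.top : Bipath n m) := by
  rw [le_iff_toPair, Prod.le_def]
  cases x with
  | bot => exact ⟨Nat.zero_le _, Nat.zero_le _⟩
  | up i => have := i.isLt; exact ⟨by simp only [toPair]; omega, by simp only [toPair]; omega⟩
  | down j => have := j.isLt; exact ⟨by simp only [toPair]; omega, by simp only [toPair]; omega⟩
  | top => exact ⟨le_refl _, le_refl _⟩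

theorem up_le_up {i j : Fin n} : (Bipath.up i : Bipath n m) ≤ .up j ↔ i ≤ j := by
  rw [le_iff_toPair, Prod.le_def]
  simp only [toPair, Fin.le_def]
  omega

theorem down_le_down {i j : Fin m} : (Bipath.down i : Bipath n m) ≤ .down j ↔ i ≤ j := by
  rw [le_iff_toPair, Prod.le_def]
  simp only [toPair, Fin.le_def]
  omega

theorem not_up_le_down {i : Fin n} {j : Fin m} : ¬ (Bipath.up i : Bipath n m) ≤ .down j := by
  rw [le_iff_toPair, Prod.le_def]
  simp only [toPair]
  omega

theorem not_down_le_up {j : Fin m} {i : Fin n} : ¬ (Bipath.down j : Bipath n m) ≤ .up i := by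
  rw [le_iff_toPair, Prod.le_def]
  simp only [toPair]
  omega

theorem not_up_le_bot {i : Fin n} : ¬ (Bipath.up i : Bipath n m) ≤ .bot := by
  rw [le_iff_toPair, Prod.le_def]
  simp only [toPair]
  omega

theorem not_down_le_bot {j : Fin m} : ¬ (Bipath.down j : Bipath n m) ≤ .bot := by
  rw [le_iff_toPair, Prod.le_def]
  simp only [toPair]
  omega

theorem not_top_le_bot : ¬ (Bipath.top : Bipath n m) ≤ .bot := by
  rw [le_iff_toPair, Prod.le_def]
  simp only [toPair]
  omega

theorem not_top_le_up {i : Fin n} : ¬ (Bipath.top : Bipath n m) ≤ .up i := by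
  rw [le_iff_toPair, Prod.le_def]
  simp only [toPair]
  omega

theorem not_top_le_down {j : Fin m} : ¬ (Bipath.top : Bipath n m) ≤ .down j := by
  rw [le_iff_toPair, Prod.le_def]
  simp only [toPair]
  omega

instance : Finite (Bipath n m) := by
  apply Finite.of_surjective
    (fun x : (Unit ⊕ Fin n) ⊕ (Fin m ⊕ Unit) =>
      match x with
      | .inl (.inl _) => (Bipath.bot : Bipath n m)
      | .inl (.inr i) => .up i
      | .inr (.inl j) => .down j
      | .inr (.inr _) => .top)
  intro b
  cases b with
  | bot => exact ⟨.inl (.inl ()), rfl⟩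
  | up i => exact ⟨.inl (.inr i), rfl⟩
  | down j => exact ⟨.inr (.inl j), rfl⟩
  | top => exact ⟨.inr (.inr ()), rfl⟩

end Bipath

/-- The family of submodules `a ↦ V(0̂ ≤ a)(N)` is preserved by the structure maps. -/
theorem submap_mono {k : Type} [Field k] {n m : ℕ} (V : PersMod k (Bipath n m))
    (N : Submodule k (V.V Bipath.bot)) :
    ∀ {a b : Bipath n m} (h : a ≤ b), ∀ x ∈ Submodule.map (V.map (Bipath.bot_le' a)) N,
      V.map h x ∈ Submodule.map (V.map (Bipath.bot_le' b)) N := by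
  intro a b h x hx
  obtain ⟨y, hy, rfl⟩ := hx
  refine ⟨y, hy, ?_⟩
  rw [← LinearMap.comp_apply, ← V.map_comp]


theorem univ_convex {P : Type} [PartialOrder P] : IsConvex (Set.univ : Set P) := by
  intro a b z _ _ _ _
  trivial

section Statement3Aux

variable {k : Type} [Field k] {n m : ℕ} (V : PersMod k (Bipath n m))
  (N : Submodule k (V.V Bipath.bot))

/-- The subfunctor `Y(a) = V(0̂ ≤ a)(N)`. -/
noncomputable def Ymod : PersMod k (Bipath n m) :=
  V.sub (fun a => Submodule.map (V.map (Bipath.bot_le' a)) N) (submap_mono V N)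

theorem mem_bot_of_mem_N {y : V.V Bipath.bot} (hy : y ∈ N) :
    y ∈ Submodule.map (V.map (Bipath.bot_le' Bipath.bot)) N := by
  have hid : V.map (Bipath.bot_le' Bipath.bot) = LinearMap.id := V.map_id Bipath.bot
  exact ⟨y, hy, by rw [hid]; rfl⟩

theorem vmap_comp' {a b : Bipath n m} (h : a ≤ b) :
    V.map (Bipath.bot_le' b) = (V.map h).comp (V.map (Bipath.bot_le' a)) :=
  V.map_comp (Bipath.bot_le' a) h

theorem vmap_top' {a b : Bipath n m} (h : a ≤ b) :
    V.map (Bipath.le_top' a) = (V.map (Bipath.le_top' b)).comp (V.map h) :=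
  V.map_comp h (Bipath.le_top' b)

theorem vmap_bot_top' (a : Bipath n m) :
    V.map (Bipath.bot_le' Bipath.top)
      = (V.map (Bipath.le_top' a)).comp (V.map (Bipath.bot_le' a)) :=
  V.map_comp (Bipath.bot_le' a) (Bipath.le_top' a)

theorem ymap_comp' {a b : Bipath n m} (h : a ≤ b) :
    (Ymod V N).map (Bipath.bot_le' b)
      = ((Ymod V N).map h).comp ((Ymod V N).map (Bipath.bot_le' a)) :=
  (Ymod V N).map_comp (Bipath.bot_le' a) h

theorem ymap_top' {a b : Bipath n m} (h : a ≤ b) :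
    (Ymod V N).map (Bipath.le_top' a)
      = ((Ymod V N).map (Bipath.le_top' b)).comp ((Ymod V N).map h) :=
  (Ymod V N).map_comp h (Bipath.le_top' b)

/-- Underlying vector of an element of `Y(a)`. -/
def yval {a : Bipath n m} (x : (Ymod V N).V a) : V.V a := Subtype.val x

theorem yext {a : Bipath n m} {x y : (Ymod V N).V a} (h : yval V N x = yval V N y) :
    x = y := Subtype.ext h

theorem ymap_coe {a b : Bipath n m} (h : a ≤ b) (x : (Ymod V N).V a) :
    yval V N ((Ymod V N).map h x) = V.map h (yval V N x) :=
  rfl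

theorem ymap_injective
    (hinj : Function.Injective ((V.map (Bipath.bot_le' Bipath.top)).domRestrict N))
    {a b : Bipath n m} (h : a ≤ b) :
    Function.Injective ((Ymod V N).map h) := by
  rw [injective_iff_map_eq_zero]
  intro x hx
  obtain ⟨z, hz, hzx⟩ := x.2
  have hx1 : V.map h (yval V N x) = 0 := by
    rw [← ymap_coe V N h x, hx]; rfl
  have htop : V.map (Bipath.le_top' a) (yval V N x) = 0 := by
    rw [vmap_top' V h, LinearMap.comp_apply, hx1, map_zero]
  have hz0 : (⟨z, hz⟩ : N) = 0 := by
    apply hinj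
    rw [map_zero, LinearMap.domRestrict_apply]
    show V.map (Bipath.bot_le' Bipath.top) z = 0
    rw [vmap_bot_top' V a, LinearMap.comp_apply]
    show V.map (Bipath.le_top' a) (V.map (Bipath.bot_le' a) z) = 0
    rw [hzx]
    exact htop
  have hz1 : z = 0 := congrArg Subtype.val hz0
  apply yext
  show yval V N x = 0
  rw [show yval V N x = V.map (Bipath.bot_le' a) z from hzx.symm, hz1, map_zero]

theorem ymap_bot_bijective
    (hinj : Function.Injective ((V.map (Bipath.bot_le' Bipath.top)).domRestrict N))
    (a : Bipath n m) :
    Function.Bijective ((Ymod V N).map (Bipath.bot_le' a)) := by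
  refine ⟨ymap_injective V N hinj _, ?_⟩
  rintro ⟨x, z, hz, hzx⟩
  refine ⟨⟨z, mem_bot_of_mem_N V N hz⟩, ?_⟩
  apply yext
  show V.map (Bipath.bot_le' a) z = x
  exact hzx

variable (hinj : Function.Injective ((V.map (Bipath.bot_le' Bipath.top)).domRestrict N))

/-- The structure map of `Y` from `0̂`, as a linear equivalence. -/
noncomputable def ψmod (a : Bipath n m) :
    (Ymod V N).V Bipath.bot ≃ₗ[k] (Ymod V N).V a :=
  LinearEquiv.ofBijective ((Ymod V N).map (Bipath.bot_le' a))
    (ymap_bot_bijective V N hinj a)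

theorem ψnat {a b : Bipath n m} (h : a ≤ b) (x : (Ymod V N).V Bipath.bot) :
    (Ymod V N).map h (ψmod V N hinj a x) = ψmod V N hinj b x := by
  show (Ymod V N).map h ((Ymod V N).map (Bipath.bot_le' a) x)
      = (Ymod V N).map (Bipath.bot_le' b) x
  rw [ymap_comp' V N h]
  rfl

/-- Comparison equivalence `Y(a) ≃ Y(1̂)`. -/
noncomputable def χmod (a : Bipath n m) :
    (Ymod V N).V a ≃ₗ[k] (Ymod V N).V Bipath.top :=
  (ψmod V N hinj a).symm.trans (ψmod V N hinj Bipath.top)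

theorem χspec (a : Bipath n m) (x : (Ymod V N).V a) :
    (Ymod V N).map (Bipath.le_top' a) x = χmod V N hinj a x := by
  conv_lhs => rw [← (ψmod V N hinj a).apply_symm_apply x]
  exact ψnat V N hinj (Bipath.le_top' a) _

theorem χnat {a b : Bipath n m} (h : a ≤ b) (w : (Ymod V N).V Bipath.top) :
    (Ymod V N).map h ((χmod V N hinj a).symm w) = (χmod V N hinj b).symm w := by
  apply (χmod V N hinj b).injective
  have hc : (Ymod V N).map (Bipath.le_top' a) ((χmod V N hinj a).symm w)
      = (Ymod V N).map (Bipath.le_top' b)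
          ((Ymod V N).map h ((χmod V N hinj a).symm w)) := by
    rw [ymap_top' V N h]; rfl
  rw [LinearEquiv.apply_symm_apply, ← χspec V N hinj, ← hc, χspec V N hinj, LinearEquiv.apply_symm_apply]

/-- The complement persistence module: pointwise quotient of `V` by `Y`. -/
noncomputable def Wmod : PersMod k (Bipath n m) where
  V a := V.V a ⧸ Submodule.map (V.map (Bipath.bot_le' a)) N
  map {a b} h := Submodule.mapQ _ _ (V.map h) (fun x hx => submap_mono V N h x hx)
  map_id a := by
    apply Submodule.linearMap_qext
    apply LinearMap.ext
    intro x
    simp [Submodule.mapQ_apply, V.map_id]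
  map_comp {a b c} hab hbc := by
    apply Submodule.linearMap_qext
    apply LinearMap.ext
    intro x
    simp only [LinearMap.comp_apply, Submodule.mkQ_apply, Submodule.mapQ_apply]
    rw [V.map_comp hab hbc]
    rfl

/-- A natural retraction `V → Y` built from a linear projection at the top. -/
noncomputable def rmap (ρ : V.V Bipath.top →ₗ[k] (Ymod V N).V Bipath.top)
    (a : Bipath n m) : V.V a →ₗ[k] (Ymod V N).V a :=
  (χmod V N hinj a).symm.toLinearMap.comp (ρ.comp (V.map (Bipath.le_top' a)))

theorem rmap_retract (ρ : V.V Bipath.top →ₗ[k] (Ymod V N).V Bipath.top)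
    (hρ : ∀ x : (Ymod V N).V Bipath.top, ρ (yval V N x) = x)
    (a : Bipath n m) (x : (Ymod V N).V a) :
    rmap V N hinj ρ a (yval V N x) = x := by
  show (χmod V N hinj a).symm (ρ (V.map (Bipath.le_top' a) (yval V N x))) = x
  have h1 : V.map (Bipath.le_top' a) (yval V N x)
      = yval V N ((Ymod V N).map (Bipath.le_top' a) x) :=
    (ymap_coe V N _ x).symm
  rw [h1, χspec V N hinj a x, hρ, LinearEquiv.symm_apply_apply]

theorem rmap_natural (ρ : V.V Bipath.top →ₗ[k] (Ymod V N).V Bipath.top)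
    {a b : Bipath n m} (h : a ≤ b) (v : V.V a) :
    rmap V N hinj ρ b (V.map h v) = (Ymod V N).map h (rmap V N hinj ρ a v) := by
  show (χmod V N hinj b).symm (ρ (V.map (Bipath.le_top' b) (V.map h v)))
      = (Ymod V N).map h ((χmod V N hinj a).symm (ρ (V.map (Bipath.le_top' a) v)))
  rw [χnat V N hinj h, vmap_top' V h]
  rfl

end Statement3Aux

/-- Let `V` be a bipath persistence module, and let `N ⊆ V(0̂)` be a
subspace mapped isomorphically onto `Im V(0̂ ≤ 1̂)` by `V(0̂ ≤ 1̂)`. Let `Y` be the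
subfunctor of `V` given by `Y(a) = V(0̂ ≤ a)(N)`. Then `Y` is a direct summand of `V`,
`Y` is isomorphic to `rank V(0̂ ≤ 1̂)` many copies of the full interval module `k_B`, and
there is a bipath persistence module `W` with `W(0̂ ≤ 1̂) = 0` such that `V ≅ Y ⊕ W`. -/
theorem statement3 (k : Type) [Field k] {n m : ℕ} (V : PersMod k (Bipath n m))
    (N : Submodule k (V.V Bipath.bot))
    (hinj : Function.Injective ((V.map (Bipath.bot_le' Bipath.top)).domRestrict N))
    (hsurj : Submodule.map (V.map (Bipath.bot_le' Bipath.top)) N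
      = LinearMap.range (V.map (Bipath.bot_le' Bipath.top))) :
    letI Y : PersMod k (Bipath n m) :=
      V.sub (fun a => Submodule.map (V.map (Bipath.bot_le' a)) N) (submap_mono V N)
    ∃ W : PersMod k (Bipath n m),
      W.map (Bipath.bot_le' Bipath.top) = 0 ∧
      PersMod.Iso V (Y.prod W) ∧
      PersMod.Iso Y
        (PersMod.dsum
          (fun _ : Fin (Module.finrank k
              (LinearMap.range (V.map (Bipath.bot_le' Bipath.top)))) =>
            intervalModule k (Set.univ : Set (Bipath n m)) univ_convex)) := by
  classical
  refine ⟨Wmod V N, ?_, ?_, ?_⟩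
  · -- W(0̂ ≤ 1̂) = 0
    apply Submodule.linearMap_qext
    apply LinearMap.ext
    intro x
    show Submodule.Quotient.mk (V.map (Bipath.bot_le' Bipath.top) x)
        = (0 : V.V Bipath.top ⧸ Submodule.map (V.map (Bipath.bot_le' Bipath.top)) N)
    rw [Submodule.Quotient.mk_eq_zero, hsurj]
    exact ⟨x, rfl⟩
  · -- V ≅ Y × W
    obtain ⟨C, hC⟩ := Submodule.exists_isCompl
      (Submodule.map (V.map (Bipath.bot_le' Bipath.top)) N)
    set ρ : V.V Bipath.top →ₗ[k] (Ymod V N).V Bipath.top :=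
      Submodule.projectionOnto _ C hC with hρdef
    have hρ : ∀ x : (Ymod V N).V Bipath.top, ρ (yval V N x) = x := fun x =>
      Submodule.projectionOnto_apply_left hC x
    refine ⟨⟨fun a => LinearMap.prod (rmap V N hinj ρ a)
      ((Submodule.map (V.map (Bipath.bot_le' a)) N).mkQ), ?_⟩, ?_⟩
    · intro a b h
      apply LinearMap.ext
      intro v
      apply Prod.ext
      · show rmap V N hinj ρ b (V.map h v) = (Ymod V N).map h (rmap V N hinj ρ a v)
        exact rmap_natural V N hinj ρ h v
      · rfl
    · intro a
      have hfr : Module.finrank k ((Ymod V N).V a × (Wmod V N).V a)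
          = Module.finrank k (V.V a) := by
        rw [Module.finrank_prod, add_comm]
        exact Submodule.finrank_quotient_add_finrank _
      have hinj' : Function.Injective (LinearMap.prod (rmap V N hinj ρ a)
          ((Submodule.map (V.map (Bipath.bot_le' a)) N).mkQ)) := by
        rw [injective_iff_map_eq_zero]
        intro v hv
        have h2 : ((Submodule.map (V.map (Bipath.bot_le' a)) N).mkQ) v
            = (0 : (Wmod V N).V a) := congrArg Prod.snd hv
        have hv' : v ∈ Submodule.map (V.map (Bipath.bot_le' a)) N := by
          exact (Submodule.Quotient.mk_eq_zero _).1 h2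
        have h1 : rmap V N hinj ρ a v = 0 := congrArg Prod.fst hv
        have h3 : (⟨v, hv'⟩ : Submodule.map (V.map (Bipath.bot_le' a)) N) = 0 := by
          rw [← rmap_retract V N hinj ρ hρ a ⟨v, hv'⟩]
          exact h1
        simpa using congrArg Subtype.val h3
      exact ⟨hinj',
        (LinearMap.injective_iff_surjective_of_finrank_eq_finrank hfr.symm).1 hinj'⟩
  · -- Y ≅ ⊕ k_B
    have hfr_bot : Module.finrank k ((Ymod V N).V Bipath.bot)
        = Module.finrank k (LinearMap.range (V.map (Bipath.bot_le' Bipath.top))) := by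
      rw [(ψmod V N hinj Bipath.top).finrank_eq]
      show Module.finrank k
          (Submodule.map (V.map (Bipath.bot_le' Bipath.top)) N) = _
      rw [hsurj]
    let e : (Ymod V N).V Bipath.bot ≃ₗ[k]
        (Fin (Module.finrank k (LinearMap.range (V.map (Bipath.bot_le' Bipath.top)))) → k) :=
      (Module.finBasisOfFinrankEq k _ hfr_bot).equivFun
    refine ⟨⟨fun a => LinearMap.pi (fun i =>
        (LinearMap.pi fun _ => (LinearMap.id : k →ₗ[k] k)).comp
        ((LinearMap.proj i).comp
          (e.toLinearMap.comp (ψmod V N hinj a).symm.toLinearMap))), ?_⟩, ?_⟩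
    · intro a b h
      apply LinearMap.ext
      intro x
      funext i p
      have key : (ψmod V N hinj b).symm ((Ymod V N).map h x)
          = (ψmod V N hinj a).symm x := by
        apply (ψmod V N hinj b).injective
        rw [LinearEquiv.apply_symm_apply,
          ← ψnat V N hinj h ((ψmod V N hinj a).symm x)]
        exact congrArg ((Ymod V N).map h) ((ψmod V N hinj a).apply_symm_apply x).symm
      simp only [PersMod.dsum, intervalModule, LinearMap.coe_comp, Function.comp_apply,
        LinearMap.pi_apply, LinearMap.proj_apply, LinearMap.coe_mk, AddHom.coe_mk,
        LinearEquiv.coe_coe, LinearMap.id_apply]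
      show e ((ψmod V N hinj b).symm ((Ymod V N).map h x)) i
          = @dite _ (a ∈ (Set.univ : Set (Bipath n m))) (Classical.propDecidable _)
            (fun _ => e ((ψmod V N hinj a).symm x) i) (fun _ => 0)
      rw [dif_pos (Set.mem_univ a)]
      exact congrArg (fun z => e z i) key
    · intro a
      constructor
      · intro x y hxy
        apply (ψmod V N hinj a).symm.injective
        apply e.injective
        funext i
        exact congrFun (congrFun hxy i) ⟨Set.mem_univ a⟩
      · intro g
        refine ⟨ψmod V N hinj a (e.symm (fun i => g i ⟨Set.mem_univ a⟩)), ?_⟩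
        funext i p
        show e ((ψmod V N hinj a).symm
            (ψmod V N hinj a (e.symm fun j => g j ⟨Set.mem_univ a⟩))) i = g i p
        rw [LinearEquiv.symm_apply_apply, LinearEquiv.apply_symm_apply]
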